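/- arXiv:2601.21455 — 6 statements merged into one kernel-verified Lean document; each statement's English description precedes it below -/
import Mathlib

section
/- Let (Ω, 𝓕, ℙ) be a probability space, α ∈ (0,1), p ∈ (1-α, 1), and α' = 1 - (1-α)/p. Let G ∈ 𝓕 be an event with ℙ(G) > 0, let C, C' ∈ 𝓕 be events, and let B ∈ 𝓕 with ℙ(B) = p be an event independent of the event C' ∩ G. Write f = 1 - ℙ(C ∣ G) and f' = 1 - ℙ(C' ∣ G) for the conditional miscoverage probabilities given G. If f - p·f' ≥ 1 - p, then ℙ(C' ∩ B ∣ G) ≥ ℙ(C ∣ G). -/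
open MeasureTheory ProbabilityTheory

/-- Sufficient condition for the Prejudicial Trick to improve conditional (group) coverage:
with `f = 1 - ℙ(C ∣ G)` and `f' = 1 - ℙ(C' ∣ G)`, if `f - p·f' ≥ 1 - p` then
`ℙ(C' ∩ B ∣ G) ≥ ℙ(C ∣ G)`, where `B` has probability `p` and is independent of `C' ∩ G`. -/
theorem pt_group_coverage_improvement {Ω : Type*} [MeasurableSpace Ω]
    (μ : Measure Ω) [IsProbabilityMeasure μ]
    (α p : ℝ) (hα : α ∈ Set.Ioo (0 : ℝ) 1) (hp : p ∈ Set.Ioo (1 - α) 1)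
    (α' : ℝ) (hα' : α' = 1 - (1 - α) / p)
    (G C C' B : Set Ω) (hG : MeasurableSet G) (hC : MeasurableSet C)
    (hC' : MeasurableSet C') (hB : MeasurableSet B)
    (hGpos : 0 < μ G)
    (hpB : μ B = ENNReal.ofReal p)
    (hindep : IndepSet B (C' ∩ G) μ)
    (hcond : (1 - (μ[|G] C).toReal) - p * (1 - (μ[|G] C').toReal) ≥ 1 - p) :
    μ[|G] C ≤ μ[|G] (C' ∩ B) := by
  have hGne : μ G ≠ 0 := hGpos.ne'
  have hGfin : μ G ≠ ⊤ := measure_ne_top μ G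
  have hprob : IsProbabilityMeasure (μ[|G]) := cond_isProbabilityMeasure hGne
  have hCfin : μ[|G] C ≠ ⊤ := measure_ne_top _ _
  have hC'fin : μ[|G] C' ≠ ⊤ := measure_ne_top _ _
  have hkey : μ[|G] (C' ∩ B) = ENNReal.ofReal p * μ[|G] C' := by
    rw [cond_apply hG, cond_apply hG]
    have : G ∩ (C' ∩ B) = B ∩ (C' ∩ G) := by
      ext x; simp [Set.mem_inter_iff]; tauto
    rw [this, hindep.measure_inter_eq_mul, hpB]
    have : G ∩ C' = C' ∩ G := Set.inter_comm _ _
    rw [this]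
    ring
  rw [hkey]
  have hpnn : 0 ≤ p := le_trans (by linarith [hα.2]) hp.1.le
  have hrhsfin : ENNReal.ofReal p * μ[|G] C' ≠ ⊤ := ENNReal.mul_ne_top ENNReal.ofReal_ne_top hC'fin
  rw [← ENNReal.toReal_le_toReal hCfin hrhsfin, ENNReal.toReal_mul, ENNReal.toReal_ofReal hpnn]
  nlinarith [hcond]
end

section
/- Let (E, ℰ, μ) be a probability space, let L : E → ℝ → ℝ, and let c ∈ (0,1). Define G : ℝ → ℝ by G(u) = ∫ L(x, u) dμ(x). Assume G is differentiable at c with derivative D, and assume G(c)/c > D. Then there exists p ∈ (c, 1) such that p · G(c/p) < G(c). -/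
/-! The map `f p = p * G (c / p)` satisfies `f 1 = G c` and, by the chain rule,
`f' 1 = G c - c * D`, which is positive exactly when `G c / c > D`. A function with positive
derivative at `1` is smaller than `f 1` just to the left of `1`, i.e. at some `p ∈ (c, 1)`. -/

open Filter Topology MeasureTheory

theorem HasDerivAt.eventually_lt_of_deriv_pos {f : ℝ → ℝ} {f' x : ℝ} (hf : HasDerivAt f f' x)
    (hf' : 0 < f') : ∀ᶠ y in 𝓝[<] x, f y < f x := by
  have hslope : ∀ᶠ y in 𝓝[<] x, 0 < slope f x y :=
    (hasDerivAt_iff_tendsto_slope_left_right.mp hf).1.eventually (eventually_gt_nhds hf')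
  filter_upwards [hslope, self_mem_nhdsWithin] with y hy hyx
  exact (slope_pos_iff_gt hyx).mp hy

theorem hasDerivAt_mul_comp_div {G : ℝ → ℝ} {c q D : ℝ} (hq : q ≠ 0)
    (hG : HasDerivAt G D (c / q)) :
    HasDerivAt (fun p => p * G (c / p)) (G (c / q) - c / q * D) q := by
  have hdiv : HasDerivAt (fun p => c / p) (-(c / q ^ 2)) q := by
    simpa [div_eq_mul_inv] using (hasDerivAt_inv hq).const_mul c
  refine ((hasDerivAt_id' q).fun_mul (hG.comp q hdiv)).congr_deriv ?_
  rw [Function.comp_apply]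
  field_simp
  ring

theorem pt_first_order_condition_general
    (c : ℝ) (hc : c ∈ Set.Ioo (0 : ℝ) 1)
    (G : ℝ → ℝ)
    (D : ℝ) (hderiv : HasDerivAt G D c)
    (hcond : G c / c > D) :
    ∃ p ∈ Set.Ioo c 1, p * G (c / p) < G c := by
  have hf : HasDerivAt (fun p => p * G (c / p)) (G c - c * D) 1 := by
    simpa using hasDerivAt_mul_comp_div one_ne_zero (by simpa using hderiv)
  have hpos : 0 < G c - c * D := by
    have := (lt_div_iff₀ hc.1).mp hcond
    linarith
  have hleft : ∀ᶠ p in 𝓝[<] (1 : ℝ), p ∈ Set.Ioo c 1 := Ioo_mem_nhdsLT hc.2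
  obtain ⟨p, hp, hlt⟩ := (hleft.and (hf.eventually_lt_of_deriv_pos hpos)).exists
  exact ⟨p, hp, by simpa using hlt⟩

/-- First-order condition: if the expected length `G(u) = ∫ L(x,u) dμ` is differentiable
at the target coverage level `c ∈ (0,1)` with derivative `D` and `G(c)/c > D`, then
there exists `p ∈ (c,1)` with `p · G(c/p) < G(c)`. -/
theorem pt_first_order_condition {E : Type*} [MeasurableSpace E]
    (μ : Measure E) [IsProbabilityMeasure μ]
    (L : E → ℝ → ℝ) (c : ℝ) (hc : c ∈ Set.Ioo (0 : ℝ) 1)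
    (G : ℝ → ℝ) (hG : ∀ u, G u = ∫ x, L x u ∂μ)
    (D : ℝ) (hderiv : HasDerivAt G D c)
    (hcond : G c / c > D) :
    ∃ p ∈ Set.Ioo c 1, p * G (c / p) < G c :=
  pt_first_order_condition_general c hc G D hderiv hcond
end

section
/- Let ℓ : ℝ → ℝ and c ∈ (0,1). Assume ℓ is differentiable at c with derivative D and that ℓ(c)/c > D. Then there exists p ∈ (c, 1) such that p · ℓ(c/p) < ℓ(c). -/
/-! The function `g p = p * ℓ (c / p)` satisfies `g 1 = ℓ c` and `g' 1 = ℓ c - c * D > 0`,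
so `g p < g 1` for every `p < 1` close enough to `1`. -/

open Filter Topology

lemma HasDerivAt.eventually_lt_nhdsLT {g : ℝ → ℝ} {g' x : ℝ} (h : HasDerivAt g g' x)
    (hg' : 0 < g') : ∀ᶠ y in 𝓝[<] x, g y < g x := by
  have hslope : ∀ᶠ y in 𝓝[<] x, 0 < slope g x y :=
    (hasDerivAt_iff_tendsto_slope.mp h |>.mono_left (nhdsWithin_mono _ fun _ hy => ne_of_lt hy))
      |>.eventually (eventually_gt_nhds hg')
  filter_upwards [hslope, self_mem_nhdsWithin] with y hy (hyx : y < x)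
  have hdiff : (y - x) * slope g x y = g y - g x := sub_smul_slope g x y
  linarith [mul_neg_of_neg_of_pos (sub_neg.mpr hyx) hy]

lemma HasDerivAt.perspective {𝕜 : Type*} [NontriviallyNormedField 𝕜] {ℓ : 𝕜 → 𝕜} {c p D : 𝕜}
    (hp : p ≠ 0) (h : HasDerivAt ℓ D (c / p)) :
    HasDerivAt (fun q => q * ℓ (c / q)) (ℓ (c / p) - c / p * D) p := by
  have hdiv : HasDerivAt (fun q => c / q) (-c / p ^ 2) p := by
    simpa [div_eq_mul_inv, neg_div] using (hasDerivAt_inv hp).const_mul c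
  have hcomp : HasDerivAt (fun q => ℓ (c / q)) (D * (-c / p ^ 2)) p := h.comp p hdiv
  have hmul : HasDerivAt (fun q => q * ℓ (c / q)) (1 * ℓ (c / p) + p * (D * (-c / p ^ 2))) p :=
    (hasDerivAt_id' p).mul hcomp
  convert hmul using 1
  field_simp
  ring

/-- Deterministic case (VCP): if the interval length `ℓ` is differentiable at the target
coverage level `c ∈ (0,1)` with derivative `D` and `ℓ(c)/c > D`, then there exists
`p ∈ (c,1)` with `p · ℓ(c/p) < ℓ(c)`. -/
theorem pt_deterministic_first_order_condition (ℓ : ℝ → ℝ) (c : ℝ)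
    (hc : c ∈ Set.Ioo (0 : ℝ) 1)
    (D : ℝ) (hderiv : HasDerivAt ℓ D c)
    (hcond : ℓ c / c > D) :
    ∃ p ∈ Set.Ioo c 1, p * ℓ (c / p) < ℓ c := by
  obtain ⟨hc0, hc1⟩ := hc
  have hderiv_pos : 0 < ℓ (c / 1) - c / 1 * D := by
    rw [gt_iff_lt, lt_div_iff₀ hc0] at hcond
    simp only [div_one]
    linarith
  have hpersp := HasDerivAt.perspective (ℓ := ℓ) (c := c) one_ne_zero (by rwa [div_one])
  obtain ⟨p, hlt, hp⟩ :=
    ((hpersp.eventually_lt_nhdsLT hderiv_pos).and (Ioo_mem_nhdsLT hc1)).exists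
  exact ⟨p, hp, by simpa using hlt⟩
end

section
/- Let Φ be the cumulative distribution function of the standard Gaussian measure on ℝ (mean 0, variance 1). For every α ∈ (0,1), every p ∈ (1-α, 1), and all x, y ∈ ℝ such that Φ(x) = 1 - α/2 and Φ(y) = (1 + (1-α)/p)/2, it holds that x < p · y. -/
/-!
The standard Gaussian CDF `Φ` is strictly increasing, satisfies `Φ 0 = 1/2`, and is strictly
concave on `[0, ∞)` because its derivative, the density, decreases there. The hypotheses give
`Φ y > 1/2`, hence `y > 0`, and `1 - α/2 = (1 - p) Φ 0 + p Φ y`, so strict concavity yields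
`Φ x < Φ (p y)`.
-/

open ProbabilityTheory

/-- The cumulative distribution function of the standard Gaussian measure on ℝ. -/
noncomputable def stdGaussianCDF : ℝ → ℝ := fun x => cdf (gaussianReal 0 1) x

open MeasureTheory Set NNReal

namespace ProbabilityTheory

variable (μ : ℝ) {v : ℝ≥0}

lemma cdf_gaussianReal_eq_integral (hv : v ≠ 0) (x : ℝ) :
    cdf (gaussianReal μ v) x = ∫ t in Iic x, gaussianPDFReal μ v t := by
  rw [cdf_eq_real, measureReal_def, gaussianReal_apply_eq_integral μ hv,
    ENNReal.toReal_ofReal (integral_nonneg fun t => gaussianPDFReal_nonneg μ v t)]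

lemma hasDerivAt_cdf_gaussianReal (hv : v ≠ 0) (x : ℝ) :
    HasDerivAt (cdf (gaussianReal μ v)) (gaussianPDFReal μ v x) x := by
  have hint : Integrable (gaussianPDFReal μ v) := integrable_gaussianPDFReal μ v
  have hcont : Continuous (gaussianPDFReal μ v) := by
    rw [gaussianPDFReal_def]; fun_prop
  have hsplit : cdf (gaussianReal μ v) = fun x =>
      (∫ t in Iic 0, gaussianPDFReal μ v t) + ∫ t in (0 : ℝ)..x, gaussianPDFReal μ v t := by
    ext x
    rw [cdf_gaussianReal_eq_integral μ hv, ← intervalIntegral.integral_Iic_sub_Iic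
      hint.integrableOn hint.integrableOn, add_sub_cancel]
  rw [hsplit]
  exact (intervalIntegral.integral_hasDerivAt_right hint.intervalIntegrable
    (hcont.stronglyMeasurableAtFilter _ _) hcont.continuousAt).const_add _

lemma strictMono_cdf_gaussianReal (hv : v ≠ 0) : StrictMono (cdf (gaussianReal μ v)) :=
  strictMono_of_deriv_pos fun x => by
    rw [(hasDerivAt_cdf_gaussianReal μ hv x).deriv]
    exact gaussianPDFReal_pos μ v x hv

lemma cdf_gaussianReal_self (hv : v ≠ 0) : cdf (gaussianReal μ v) μ = 2⁻¹ := by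
  set P := gaussianReal μ v
  have hreflect : P.map (2 * μ - ·) = P := by
    rw [gaussianReal_map_const_sub]; congr 1; ring
  have hIic_Ici : P.real (Iic μ) = P.real (Ici μ) := by
    conv_lhs => rw [← hreflect]
    rw [map_measureReal_apply (by fun_prop) measurableSet_Iic]
    congr 1
    ext t
    simp only [mem_preimage, mem_Iic, mem_Ici]
    constructor <;> intro h <;> linarith
  have hatom : P {μ} = 0 := gaussianReal_absolutelyContinuous μ hv Real.volume_singleton
  have hIci_Ioi : P.real (Ici μ) = P.real (Iic μ)ᶜ := by
    rw [compl_Iic, measureReal_congr (Ioi_ae_eq_Ici' hatom)]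
  rw [cdf_eq_real]
  linarith [probReal_compl_eq_one_sub (μ := P) (measurableSet_Iic (a := μ))]

lemma strictConcaveOn_cdf_gaussianReal (hv : v ≠ 0) :
    StrictConcaveOn ℝ (Ici μ) (cdf (gaussianReal μ v)) := by
  refine StrictAntiOn.strictConcaveOn_of_deriv (convex_Ici μ)
    (fun x _ => (hasDerivAt_cdf_gaussianReal μ hv x).continuousAt.continuousWithinAt) ?_
  rw [interior_Ici]
  intro a ha b _ hab
  rw [(hasDerivAt_cdf_gaussianReal μ hv a).deriv, (hasDerivAt_cdf_gaussianReal μ hv b).deriv]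
  simp only [gaussianPDFReal_def]
  have hsq : (a - μ) ^ 2 < (b - μ) ^ 2 := by
    gcongr
    exact sub_nonneg.2 (le_of_lt ha)
  gcongr

end ProbabilityTheory

/-- Failure case of the Prejudicial Trick for Gaussian nonconformity scores (upper-tail form):
if `Φ x = 1 - α/2` and `Φ y = (1 + (1-α)/p)/2`, then `x < p·y`. -/
theorem gaussian_failure_upper (α p : ℝ) (hα : α ∈ Set.Ioo (0 : ℝ) 1)
    (hp : p ∈ Set.Ioo (1 - α) 1) (x y : ℝ)
    (hx : stdGaussianCDF x = 1 - α / 2)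
    (hy : stdGaussianCDF y = (1 + (1 - α) / p) / 2) :
    x < p * y := by
  obtain ⟨-, hα1⟩ := hα
  obtain ⟨hp_gt, hp_lt⟩ := hp
  have hp0 : 0 < p := by linarith
  have hΦ0 : stdGaussianCDF 0 = 2⁻¹ := cdf_gaussianReal_self 0 one_ne_zero
  have hΦ_mono : StrictMono stdGaussianCDF := strictMono_cdf_gaussianReal 0 one_ne_zero
  have hy0 : 0 < y := by
    refine hΦ_mono.lt_iff_lt.mp ?_
    rw [hΦ0, hy]
    linarith [div_pos (sub_pos.2 hα1) hp0]
  have hconcave : (1 - p) * stdGaussianCDF 0 + p * stdGaussianCDF y < stdGaussianCDF (p * y) := by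
    have := (strictConcaveOn_cdf_gaussianReal 0 one_ne_zero).2 self_mem_Ici hy0.le hy0.ne
      (sub_pos.2 hp_lt) hp0 (by ring)
    rwa [smul_zero, zero_add, smul_eq_mul, smul_eq_mul] at this
  refine hΦ_mono.lt_iff_lt.mp ?_
  calc stdGaussianCDF x = (1 - p) * stdGaussianCDF 0 + p * stdGaussianCDF y := by
        rw [hx, hΦ0, hy]; field_simp; ring
    _ < stdGaussianCDF (p * y) := hconcave
end

section
/- Let (Ω, 𝓕, ℙ) be a probability space, n ≥ 1 an integer, α ∈ (0,1), and let V₀, V₁, …, Vₙ : Ω → ℝ be measurable random variables that are exchangeable, i.e. for every permutation π of {0, 1, …, n}, the joint law of (V_{π(0)}, …, V_{π(n)}) under ℙ equals the joint law of (V₀, …, Vₙ). Let k = ⌈(1-α)(n+1)⌉ and assume k ≤ n. Define Q(ω) to be the k-th smallest value among V₀(ω), …, V_{n-1}(ω). Then ℙ(Vₙ ≤ Q) ≥ 1 - α. -/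
open MeasureTheory
open ENNReal

/-- The `k`-th smallest value among `v 0, …, v (n-1)` (with `1 ≤ k ≤ n`), defined as the
infimum of the thresholds `q` such that at least `k` of the values are `≤ q`. -/
noncomputable def kthSmallest {n : ℕ} (v : Fin n → ℝ) (k : ℕ) : ℝ :=
  sInf {q : ℝ | k ≤ (Finset.univ.filter fun i => v i ≤ q).card}

lemma le_kthSmallest_iff {n : ℕ} (hn : 1 ≤ n) (v : Fin n → ℝ) {k : ℕ}
    (hk1 : 1 ≤ k) (hkn : k ≤ n) (x : ℝ) :
    x ≤ kthSmallest v k ↔ (Finset.univ.filter fun i => v i < x).card < k := by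
  have hne : (Finset.univ : Finset (Fin n)).Nonempty := by
    have : 0 < n := hn
    exact ⟨⟨0, this⟩, Finset.mem_univ _⟩
  set S := {q : ℝ | k ≤ (Finset.univ.filter fun i => v i ≤ q).card} with hS
  have hSne : S.Nonempty := by
    refine ⟨Finset.univ.sup' hne v, ?_⟩
    have h1 : (Finset.univ.filter fun i => v i ≤ Finset.univ.sup' hne v) = Finset.univ :=
      Finset.filter_true_of_mem fun i _ => Finset.le_sup' v (Finset.mem_univ i)
    show k ≤ _
    rw [h1, Finset.card_univ, Fintype.card_fin]
    exact hkn
  have hSbdd : BddBelow S := by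
    refine ⟨Finset.univ.inf' hne v, fun q hq => ?_⟩
    obtain ⟨i, hi⟩ := Finset.card_pos.mp (lt_of_lt_of_le hk1 hq)
    have := Finset.mem_filter.mp hi
    exact le_trans (Finset.inf'_le v (Finset.mem_univ i)) this.2
  rw [kthSmallest]
  constructor
  · intro hx
    by_contra h
    push_neg at h
    have hne2 : (Finset.univ.filter fun i => v i < x).Nonempty :=
      Finset.card_pos.mp (lt_of_lt_of_le hk1 h)
    set q := (Finset.univ.filter fun i => v i < x).sup' hne2 v with hq
    have hqx : q < x := by
      rw [hq, Finset.sup'_lt_iff]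
      intro i hi
      exact (Finset.mem_filter.mp hi).2
    have hqS : q ∈ S := by
      refine le_trans h (Finset.card_le_card ?_)
      intro i hi
      exact Finset.mem_filter.mpr ⟨Finset.mem_univ _, Finset.le_sup' v hi⟩
    have := csInf_le hSbdd hqS
    exact absurd (hx.trans this) (not_le.mpr hqx)
  · intro h
    refine le_csInf hSne fun q hq => ?_
    by_contra hqx
    push_neg at hqx
    have hsub : (Finset.univ.filter fun i => v i ≤ q) ⊆ (Finset.univ.filter fun i => v i < x) := by
      intro i hi
      simp only [Finset.mem_filter, Finset.mem_univ, true_and] at hi ⊢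
      exact lt_of_le_of_lt hi hqx
    exact absurd (le_trans hq (Finset.card_le_card hsub)) (not_le.mpr h)

lemma count_low_rank {n k : ℕ} (hk : k < n + 1) (w : Fin (n + 1) → ℝ) :
    k ≤ (Finset.univ.filter fun j : Fin (n + 1) =>
      (Finset.univ.filter fun i => w i < w j).card < k).card := by
  set σ := Tuple.sort w with hσ
  have hmono : Monotone (w ∘ σ) := Tuple.monotone_sort w
  set K : Fin (n + 1) := ⟨k, hk⟩ with hK
  have hsub : (Finset.Iio K).image σ ⊆
      Finset.univ.filter fun j => (Finset.univ.filter fun i => w i < w j).card < k := by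
    intro j hj
    obtain ⟨i, hi, rfl⟩ := Finset.mem_image.mp hj
    rw [Finset.mem_Iio] at hi
    refine Finset.mem_filter.mpr ⟨Finset.mem_univ _, ?_⟩
    have hsub2 : (Finset.univ.filter fun i' => w i' < w (σ i)) ⊆
        (Finset.Iio i).image σ := by
      intro i' hi'
      have hlt : w i' < w (σ i) := (Finset.mem_filter.mp hi').2
      refine Finset.mem_image.mpr ⟨σ.symm i', Finset.mem_Iio.mpr ?_, σ.apply_symm_apply i'⟩
      by_contra hge
      push_neg at hge
      have := hmono hge
      simp only [Function.comp_apply, Equiv.apply_symm_apply] at this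
      exact absurd hlt (not_lt.mpr this)
    calc (Finset.univ.filter fun i' => w i' < w (σ i)).card
        ≤ ((Finset.Iio i).image σ).card := Finset.card_le_card hsub2
      _ ≤ (Finset.Iio i).card := Finset.card_image_le
      _ = i := Fin.card_Iio i
      _ < k := hi
  calc k = (K : ℕ) := rfl
    _ = (Finset.Iio K).card := (Fin.card_Iio K).symm
    _ = ((Finset.Iio K).image σ).card := (Finset.card_image_of_injective _ σ.injective).symm
    _ ≤ _ := Finset.card_le_card hsub

lemma card_filter_comp_perm {m : ℕ} (π : Equiv.Perm (Fin m)) (p : Fin m → Prop) [DecidablePred p] :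
    (Finset.univ.filter fun i => p (π i)).card = (Finset.univ.filter p).card := by
  apply Finset.card_bij (fun i _ => π i)
  · intro a ha
    simp only [Finset.mem_filter, Finset.mem_univ, true_and] at ha ⊢
    exact ha
  · intro a _ b _ h
    exact π.injective h
  · intro b hb
    refine ⟨π.symm b, ?_, by simp⟩
    simp only [Finset.mem_filter, Finset.mem_univ, true_and, Equiv.apply_symm_apply] at hb ⊢
    exact hb

/-- The set of score vectors whose `j`-th coordinate has strict rank below `k`. -/
def rankSet {m : ℕ} (k : ℕ) (j : Fin m) : Set (Fin m → ℝ) :=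
  {w | (Finset.univ.filter fun i => w i < w j).card < k}

lemma measurableSet_rankSet {m : ℕ} (k : ℕ) (j : Fin m) : MeasurableSet (rankSet k j) := by
  have h1 : rankSet k j =
      (fun w : Fin m → ℝ => (Finset.univ.filter fun i => w i < w j).card) ⁻¹' (Set.Iio k) := rfl
  rw [h1]
  have h2 : Measurable fun w : Fin m → ℝ => (Finset.univ.filter fun i => w i < w j).card := by
    simp only [Finset.card_filter]
    apply Finset.measurable_sum
    intro i _
    exact Measurable.ite (measurableSet_lt (measurable_pi_apply i) (measurable_pi_apply j))
      measurable_const measurable_const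
  exact h2 ((Set.Iio k).to_countable.measurableSet)

/-- Coverage guarantee of Vanilla Conformal Prediction: if `V 0, …, V n` are exchangeable
and `Q ω` is the `⌈(1-α)(n+1)⌉`-th smallest of the calibration scores `V 0 ω, …, V (n-1) ω`
(with `⌈(1-α)(n+1)⌉ ≤ n`), then `ℙ(V n ≤ Q) ≥ 1 - α`. -/
theorem vcp_coverage {Ω : Type*} [MeasurableSpace Ω]
    (μ : Measure Ω) [IsProbabilityMeasure μ]
    (n : ℕ) (hn : 1 ≤ n) (α : ℝ) (hα : α ∈ Set.Ioo (0 : ℝ) 1)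
    (V : Fin (n + 1) → Ω → ℝ) (hV : ∀ i, Measurable (V i))
    (hexch : ∀ π : Equiv.Perm (Fin (n + 1)),
      Measure.map (fun ω => fun i => V (π i) ω) μ = Measure.map (fun ω => fun i => V i ω) μ)
    (k : ℕ) (hk : k = ⌈(1 - α) * (n + 1)⌉₊) (hkn : k ≤ n) :
    ENNReal.ofReal (1 - α) ≤
      μ {ω | V (Fin.last n) ω ≤ kthSmallest (fun i : Fin n => V i.castSucc ω) k} := by
  obtain ⟨hα0, hα1⟩ := hα
  have h1α : 0 < 1 - α := by linarith
  have hk1 : 1 ≤ k := by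
    rw [hk, Nat.one_le_ceil_iff]
    positivity
  set Vvec : Ω → Fin (n + 1) → ℝ := fun ω i => V i ω with hVvecdef
  have hVvec : Measurable Vvec := measurable_pi_lambda _ hV
  set A : Fin (n + 1) → Set Ω := fun j => Vvec ⁻¹' rankSet k j with hAdef
  have hA : ∀ j, MeasurableSet (A j) := fun j => hVvec (measurableSet_rankSet k j)
  -- Step 1: the target set is A (Fin.last n)
  have htarget : {ω | V (Fin.last n) ω ≤ kthSmallest (fun i : Fin n => V i.castSucc ω) k}
      = A (Fin.last n) := by
    ext ω
    simp only [Set.mem_setOf_eq, hAdef, Set.mem_preimage, rankSet, hVvecdef]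
    rw [le_kthSmallest_iff hn _ hk1 hkn]
    have hcard : (Finset.univ.filter fun i : Fin (n + 1) => V i ω < V (Fin.last n) ω).card
        = (Finset.univ.filter fun i : Fin n => V i.castSucc ω < V (Fin.last n) ω).card := by
      rw [Finset.card_filter, Finset.card_filter, Fin.sum_univ_castSucc]
      simp
    rw [hcard]
  -- Step 2: all A j have the same measure
  have hAeq : ∀ j, μ (A j) = μ (A (Fin.last n)) := by
    intro j
    set π : Equiv.Perm (Fin (n + 1)) := Equiv.swap j (Fin.last n) with hπ
    have hcomp : Measurable (fun w : Fin (n + 1) → ℝ => w ∘ π) :=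
      measurable_pi_lambda _ fun i => measurable_pi_apply (π i)
    have hpre : (fun w : Fin (n + 1) → ℝ => w ∘ π) ⁻¹' rankSet k (Fin.last n) = rankSet k j := by
      ext w
      simp only [Set.mem_preimage, rankSet, Set.mem_setOf_eq, Function.comp_apply]
      have hπlast : π (Fin.last n) = j := Equiv.swap_apply_right _ _
      rw [card_filter_comp_perm π (fun i => w i < w (π (Fin.last n))), hπlast]
    calc μ (A j) = Measure.map Vvec μ (rankSet k j) :=
          (Measure.map_apply hVvec (measurableSet_rankSet k j)).symm
      _ = Measure.map Vvec μ ((fun w : Fin (n + 1) → ℝ => w ∘ π) ⁻¹' rankSet k (Fin.last n)) := by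
          rw [hpre]
      _ = Measure.map (fun w : Fin (n + 1) → ℝ => w ∘ π) (Measure.map Vvec μ)
            (rankSet k (Fin.last n)) :=
          (Measure.map_apply hcomp (measurableSet_rankSet k (Fin.last n))).symm
      _ = Measure.map ((fun w : Fin (n + 1) → ℝ => w ∘ π) ∘ Vvec) μ (rankSet k (Fin.last n)) := by
          rw [Measure.map_map hcomp hVvec]
      _ = Measure.map (fun ω => fun i => V (π i) ω) μ (rankSet k (Fin.last n)) := rfl
      _ = Measure.map Vvec μ (rankSet k (Fin.last n)) := by rw [hexch π]
      _ = μ (A (Fin.last n)) := Measure.map_apply hVvec (measurableSet_rankSet k (Fin.last n))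
  -- Step 3: pointwise counting bound
  have hpt : ∀ ω, (k : ℝ≥0∞) ≤ ∑ j, (A j).indicator (1 : Ω → ℝ≥0∞) ω := by
    intro ω
    have hcnt := count_low_rank (show k < n + 1 by omega) (fun i => V i ω)
    calc (k : ℝ≥0∞) ≤ ((Finset.univ.filter fun j : Fin (n + 1) =>
          (Finset.univ.filter fun i => V i ω < V j ω).card < k).card : ℕ) := by
          exact_mod_cast hcnt
      _ = ∑ j, (A j).indicator (1 : Ω → ℝ≥0∞) ω := by
          rw [Finset.card_filter]
          push_cast
          refine Finset.sum_congr rfl fun j _ => ?_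
          by_cases hj : (Finset.univ.filter fun i => V i ω < V j ω).card < k
          · rw [if_pos hj]
            rw [Set.indicator_of_mem (show ω ∈ A j from hj) (1 : Ω → ℝ≥0∞), Pi.one_apply]
          · rw [if_neg hj]
            rw [Set.indicator_of_notMem (show ω ∉ A j from hj) (1 : Ω → ℝ≥0∞)]
  -- Step 4: sum of measures bound
  have hsum : (k : ℝ≥0∞) ≤ (n + 1) * μ (A (Fin.last n)) := by
    calc (k : ℝ≥0∞) = ∫⁻ _, (k : ℝ≥0∞) ∂μ := by simp
      _ ≤ ∫⁻ ω, ∑ j, (A j).indicator (1 : Ω → ℝ≥0∞) ω ∂μ := lintegral_mono hpt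
      _ = ∑ j, ∫⁻ ω, (A j).indicator (1 : Ω → ℝ≥0∞) ω ∂μ :=
          lintegral_finset_sum _ fun j _ => measurable_one.indicator (hA j)
      _ = ∑ j : Fin (n + 1), μ (A j) := by
          refine Finset.sum_congr rfl fun j _ => lintegral_indicator_one (hA j)
      _ = ∑ _j : Fin (n + 1), μ (A (Fin.last n)) := Finset.sum_congr rfl fun j _ => hAeq j
      _ = (n + 1) * μ (A (Fin.last n)) := by
          rw [Finset.sum_const, Finset.card_univ, Fintype.card_fin, nsmul_eq_mul]
          push_cast
          ring
  -- Step 5: conclude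
  rw [htarget]
  have hdiv : (k : ℝ≥0∞) / (n + 1) ≤ μ (A (Fin.last n)) := ENNReal.div_le_of_le_mul' hsum
  refine le_trans ?_ hdiv
  rw [ENNReal.le_div_iff_mul_le (Or.inl (by simp)) (Or.inl (by finiteness))]
  have hcast : ((n : ℝ≥0∞) + 1) = ENNReal.ofReal ((n : ℝ) + 1) := by
    rw [ENNReal.ofReal_add (by positivity) zero_le_one]
    simp [ENNReal.ofReal_natCast]
  rw [hcast, ← ENNReal.ofReal_mul (le_of_lt h1α)]
  calc ENNReal.ofReal ((1 - α) * ((n : ℝ) + 1)) ≤ ENNReal.ofReal (k : ℝ) := by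
        apply ENNReal.ofReal_le_ofReal
        rw [hk]
        exact Nat.le_ceil _
    _ = (k : ℝ≥0∞) := ENNReal.ofReal_natCast k
end

section
/- Let (Ω, 𝓕, ℙ) be a probability space, α ∈ (0,1), p ∈ (0,1), and α₁', α₂' ∈ [0,1] with (1-p)·α₁' + p·α₂' = α. Let A₁, A₂, B ∈ 𝓕 be events with ℙ(A₁) ≥ 1 - α₁', ℙ(A₂) ≥ 1 - α₂', and ℙ(B) = p, such that B is independent of A₁ and B is independent of A₂. Then ℙ((A₁ ∩ Bᶜ) ∪ (A₂ ∩ B)) ≥ 1 - α. -/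
open MeasureTheory ProbabilityTheory

/-- Marginal coverage guarantee of the extended Prejudicial Trick: if `(1-p)·α₁' + p·α₂' = α`,
`ℙ(A₁) ≥ 1 - α₁'`, `ℙ(A₂) ≥ 1 - α₂'`, and `B` has probability `p` and is independent of both
`A₁` and `A₂`, then `ℙ((A₁ ∩ Bᶜ) ∪ (A₂ ∩ B)) ≥ 1 - α`. -/
theorem extended_pt_marginal_coverage {Ω : Type*} [MeasurableSpace Ω]
    (μ : Measure Ω) [IsProbabilityMeasure μ]
    (α p : ℝ) (hα : α ∈ Set.Ioo (0 : ℝ) 1) (hp : p ∈ Set.Ioo (0 : ℝ) 1)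
    (α₁' α₂' : ℝ) (hα₁' : α₁' ∈ Set.Icc (0 : ℝ) 1) (hα₂' : α₂' ∈ Set.Icc (0 : ℝ) 1)
    (hmix : (1 - p) * α₁' + p * α₂' = α)
    (A₁ A₂ B : Set Ω) (hA₁ : MeasurableSet A₁) (hA₂ : MeasurableSet A₂)
    (hB : MeasurableSet B)
    (hcov₁ : ENNReal.ofReal (1 - α₁') ≤ μ A₁)
    (hcov₂ : ENNReal.ofReal (1 - α₂') ≤ μ A₂)
    (hpB : μ B = ENNReal.ofReal p)
    (hindep₁ : IndepSet B A₁ μ) (hindep₂ : IndepSet B A₂ μ) :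
    ENNReal.ofReal (1 - α) ≤ μ ((A₁ ∩ Bᶜ) ∪ (A₂ ∩ B)) := by
  have hdisj : Disjoint (A₁ ∩ Bᶜ) (A₂ ∩ B) := by
    apply Set.disjoint_left.mpr
    rintro x ⟨_, hx⟩ ⟨_, hx'⟩
    exact hx hx'
  have hμB1 : μ B ≤ 1 := prob_le_one (μ := μ)
  have hfin : μ A₁ * μ B ≠ ⊤ := by
    exact (lt_of_le_of_lt (mul_le_one' prob_le_one hμB1) ENNReal.one_lt_top).ne
  -- μ (A₁ ∩ Bᶜ) = μ A₁ * (1 - μ B)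
  have key : ∀ A : Set Ω, MeasurableSet A → IndepSet B A μ →
      μ (A ∩ Bᶜ) = μ A * (1 - μ B) := by
    intro A hA hind
    have h1 : μ (A ∩ B) + μ (A \ B) = μ A := measure_inter_add_diff A hB
    have h2 : μ (A ∩ B) = μ B * μ A := by
      rw [Set.inter_comm]; exact hind.measure_inter_eq_mul
    have hAB : A ∩ Bᶜ = A \ B := rfl
    rw [hAB]
    have hfin' : μ B * μ A ≠ ⊤ := (measure_lt_top μ B).ne.imp (by
      intro h; exact absurd (ENNReal.mul_eq_top.mp h) (by
        simp [(measure_lt_top μ B).ne, (measure_lt_top μ A).ne]))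
    have : μ (A \ B) = μ A - μ B * μ A := by
      refine ENNReal.eq_sub_of_add_eq hfin' ?_
      rw [add_comm, ← h2]; exact h1
    rw [this, ENNReal.mul_sub (fun _ _ => (measure_lt_top μ A).ne), mul_one,
      mul_comm (μ A) (μ B)]
  rw [measure_union hdisj (hA₂.inter hB), key A₁ hA₁ hindep₁, Set.inter_comm A₂ B,
    hindep₂.measure_inter_eq_mul]
  have hBc : (1 : ENNReal) - μ B = ENNReal.ofReal (1 - p) := by
    rw [hpB, ← ENNReal.ofReal_one, ← ENNReal.ofReal_sub _ hp.1.le]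
  rw [hBc, hpB]
  have h1 : ENNReal.ofReal ((1 - α₁') * (1 - p)) ≤ μ A₁ * ENNReal.ofReal (1 - p) := by
    rw [ENNReal.ofReal_mul (by linarith [hα₁'.2])]
    exact mul_le_mul_left hcov₁ _
  have h2 : ENNReal.ofReal (p * (1 - α₂')) ≤ ENNReal.ofReal p * μ A₂ := by
    rw [ENNReal.ofReal_mul hp.1.le]
    exact mul_le_mul_right hcov₂ _
  calc ENNReal.ofReal (1 - α)
      = ENNReal.ofReal ((1 - α₁') * (1 - p) + p * (1 - α₂')) := by
        congr 1; nlinarith [hmix]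
    _ ≤ μ A₁ * ENNReal.ofReal (1 - p) + ENNReal.ofReal p * μ A₂ := by
        rw [ENNReal.ofReal_add (by nlinarith [hα₁'.2, hp.2]) (by nlinarith [hα₂'.2, hp.1])]
        exact add_le_add h1 h2
end
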